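/- Fix σ > 0 and s₁, s₂ > 0, write L = log(s₁/s₂), and for τ > 0 set d₋(τ) = (L − σ²τ/2)/(σ√τ) and Γ₂₂(τ) = N'(d₋(τ))/(σ·s₂·√τ). Then Γ₂₂ is differentiable in τ on (0,∞) and its derivative (the Colour₂₂ of the Margrabe Exchange Option) equals −(Γ₂₂(τ)/(8σ²τ²))·(σ⁴τ² + 4σ²τ − 4L²). -/

import Mathlib

open Real Filter Topology MeasureTheory

/-! Logarithmic differentiation: since `N''(x) = −x N'(x)`, the Colour satisfies
`Γ₂₂'/Γ₂₂ = −d₋ d₋' − 1/(2τ)` with `d₋' = −(2L + σ²τ)/(4στ√τ)`, and over the common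
denominator `8σ²τ²` this is `−(σ⁴τ² + 4σ²τ − 4L²)/(8σ²τ²)`. -/

/-- Standard normal density `N'(x) = (1/√(2π))·exp(−x²/2)`. -/
noncomputable def stdGaussianPDF (x : ℝ) : ℝ :=
  (Real.sqrt (2 * Real.pi))⁻¹ * Real.exp (-x ^ 2 / 2)

/-- Standard normal cumulative distribution function `N`. -/
noncomputable def stdGaussianCDF (x : ℝ) : ℝ :=
  ∫ t in Set.Iic x, stdGaussianPDF t

theorem hasDerivAt_stdGaussianPDF (x : ℝ) :
    HasDerivAt stdGaussianPDF (-x * stdGaussianPDF x) x := by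
  refine ((((hasDerivAt_pow 2 x).neg.div_const 2).exp).const_mul (√(2 * π))⁻¹).congr_deriv ?_
  simp only [stdGaussianPDF, Pi.neg_apply]
  ring

theorem HasDerivAt.stdGaussianPDF_comp {d : ℝ → ℝ} {d' x : ℝ} (hd : HasDerivAt d d' x) :
    HasDerivAt (fun t => stdGaussianPDF (d t)) (-d x * d' * stdGaussianPDF (d x)) x := by
  refine ((hasDerivAt_stdGaussianPDF (d x)).comp x hd).congr_deriv ?_
  ring

noncomputable def margrabeDMinus (L σ τ : ℝ) : ℝ :=
  (L - σ ^ 2 * τ / 2) / (σ * √τ)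

theorem hasDerivAt_margrabeDMinus (L : ℝ) {σ τ : ℝ} (hσ : σ ≠ 0) (hτ : 0 < τ) :
    HasDerivAt (margrabeDMinus L σ) (-(2 * L + σ ^ 2 * τ) / (4 * σ * τ * √τ)) τ := by
  have hsqrt : HasDerivAt (fun t => σ * √t) (σ * (1 / (2 * √τ))) τ :=
    (hasDerivAt_sqrt hτ.ne').const_mul σ
  have hnum : HasDerivAt (fun t : ℝ => L - σ ^ 2 * t / 2) (-(σ ^ 2 / 2)) τ := by
    simpa using (((hasDerivAt_id τ).const_mul (σ ^ 2)).div_const 2).const_sub L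
  have hst : 0 < √τ := sqrt_pos.2 hτ
  refine (hnum.div hsqrt (by positivity)).congr_deriv ?_
  obtain ⟨r, hr, rfl⟩ : ∃ r, 0 < r ∧ τ = r ^ 2 := ⟨√τ, hst, (sq_sqrt hτ.le).symm⟩
  rw [sqrt_sq hr.le]
  field_simp
  ring

/-- The Gamma `Γ₂₂` of the Margrabe exchange option as a function of `τ`, with `L = log(s₁/s₂)`. -/
noncomputable def margrabeGamma (L σ s₂ τ : ℝ) : ℝ :=
  stdGaussianPDF (margrabeDMinus L σ τ) / (σ * s₂ * √τ)

theorem hasDerivAt_margrabeGamma (L : ℝ) {σ s₂ τ : ℝ} (hσ : σ ≠ 0) (hs₂ : s₂ ≠ 0) (hτ : 0 < τ) :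
    HasDerivAt (margrabeGamma L σ s₂)
      (-(margrabeGamma L σ s₂ τ / (8 * σ ^ 2 * τ ^ 2)) *
        (σ ^ 4 * τ ^ 2 + 4 * σ ^ 2 * τ - 4 * L ^ 2)) τ := by
  have hst : 0 < √τ := sqrt_pos.2 hτ
  have hden : HasDerivAt (fun t => σ * s₂ * √t) (σ * s₂ * (1 / (2 * √τ))) τ :=
    (hasDerivAt_sqrt hτ.ne').const_mul (σ * s₂)
  have h := (hasDerivAt_margrabeDMinus L hσ hτ).stdGaussianPDF_comp.div hden (by positivity)
  refine h.congr_deriv ?_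
  obtain ⟨r, hr, rfl⟩ : ∃ r, 0 < r ∧ τ = r ^ 2 := ⟨√τ, hst, (sq_sqrt hτ.le).symm⟩
  simp only [margrabeGamma, margrabeDMinus, sqrt_sq hr.le]
  field_simp
  ring

theorem margrabe_colour_two_two_general (σ s₁ s₂ : ℝ) (hσ : 0 < σ) (hs₂ : 0 < s₂) :
    ∀ τ : ℝ, 0 < τ →
      HasDerivAt
        (fun τ : ℝ =>
          stdGaussianPDF ((Real.log (s₁ / s₂) - σ ^ 2 * τ / 2) / (σ * Real.sqrt τ)) /
            (σ * s₂ * Real.sqrt τ))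
        (-(stdGaussianPDF ((Real.log (s₁ / s₂) - σ ^ 2 * τ / 2) / (σ * Real.sqrt τ)) /
            (σ * s₂ * Real.sqrt τ) / (8 * σ ^ 2 * τ ^ 2)) *
          (σ ^ 4 * τ ^ 2 + 4 * σ ^ 2 * τ - 4 * Real.log (s₁ / s₂) ^ 2)) τ :=
  fun _ hτ => hasDerivAt_margrabeGamma (Real.log (s₁ / s₂)) hσ.ne' hs₂.ne' hτ

/-- `Γ₂₂(τ) = N'(d₋(τ))/(σ·s₂·√τ)` is differentiable in `τ` on `(0,∞)` with derivative
(the Colour₂₂) `−(Γ₂₂(τ)/(8σ²τ²))·(σ⁴τ² + 4σ²τ − 4L²)`, where `L = log(s₁/s₂)`. -/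
theorem margrabe_colour_two_two (σ s₁ s₂ : ℝ) (hσ : 0 < σ) (hs₁ : 0 < s₁) (hs₂ : 0 < s₂) :
    ∀ τ : ℝ, 0 < τ →
      HasDerivAt
        (fun τ : ℝ =>
          stdGaussianPDF ((Real.log (s₁ / s₂) - σ ^ 2 * τ / 2) / (σ * Real.sqrt τ)) /
            (σ * s₂ * Real.sqrt τ))
        (-(stdGaussianPDF ((Real.log (s₁ / s₂) - σ ^ 2 * τ / 2) / (σ * Real.sqrt τ)) /
            (σ * s₂ * Real.sqrt τ) / (8 * σ ^ 2 * τ ^ 2)) *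
          (σ ^ 4 * τ ^ 2 + 4 * σ ^ 2 * τ - 4 * Real.log (s₁ / s₂) ^ 2)) τ :=
  margrabe_colour_two_two_general σ s₁ s₂ hσ hs₂
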